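/- Consider the control system ẋ¹ = x² + x³u², ẋ² = x³ + x¹u², ẋ³ = u¹ + x²u², ẋ⁴ = u² with Pfaffian representation S₀ = span{ω₀¹,ω₀²,ω₀³,ω₀⁴}, ω₀¹ = dx¹-(x²+x³u²)dt, ω₀² = dx²-(x³+x¹u²)dt, ω₀³ = dx³-(u¹+x²u²)dt, ω₀⁴ = dx⁴-u²dt. The 1-forms ω₁¹ = dx¹ - x³dx⁴ - x²dt and ω₁² = dx² - x¹dx⁴ - x³dt span the first derived system S₀^{(1)}: each ωᵢ¹ ∈ S₀ (as a pointwise linear combination of the ω₀ʲ) and dω₁ⁱ ∧ ω₀¹ ∧ ω₀² ∧ ω₀³ ∧ ω₀⁴ = 0 for i = 1,2. -/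

import Mathlib

noncomputable section

open scoped BigOperators

/-- Coordinates `(t, x¹, x², x³, x⁴, u¹, u²)` indexed by `0,…,6`. -/
abbrev E7 := Fin 7 → ℝ

def pr7 (i : Fin 7) : E7 →L[ℝ] ℝ := ContinuousLinearMap.proj i

/-- Exterior derivative of a 1-form evaluated on two vectors. -/
def dOne {E : Type*} [NormedAddCommGroup E] [NormedSpace ℝ E]
    (ω : E → E →L[ℝ] ℝ) (x v w : E) : ℝ :=
  fderiv ℝ ω x v w - fderiv ℝ ω x w v

def ω01 : E7 → E7 →L[ℝ] ℝ := fun x => pr7 1 - (x 2 + x 3 * x 6) • pr7 0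
def ω02 : E7 → E7 →L[ℝ] ℝ := fun x => pr7 2 - (x 3 + x 1 * x 6) • pr7 0
def ω03 : E7 → E7 →L[ℝ] ℝ := fun x => pr7 3 - (x 5 + x 2 * x 6) • pr7 0
def ω04 : E7 → E7 →L[ℝ] ℝ := fun x => pr7 4 - x 6 • pr7 0

/-- `ω₁¹ = dx¹ - x³dx⁴ - x²dt`. -/
def ω11 : E7 → E7 →L[ℝ] ℝ := fun x => pr7 1 - x 3 • pr7 4 - x 2 • pr7 0
/-- `ω₁² = dx² - x¹dx⁴ - x³dt`. -/
def ω12 : E7 → E7 →L[ℝ] ℝ := fun x => pr7 2 - x 1 • pr7 4 - x 3 • pr7 0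

/-- The 6-form `η ∧ a ∧ b ∧ c ∧ d` (2-form `η`, 1-forms `a,b,c,d`) evaluated
on six vectors, up to a nonzero combinatorial factor. -/
def wedge21111 (η : E7 → E7 → E7 → ℝ) (a b c d : E7 → E7 →L[ℝ] ℝ)
    (x : E7) (v : Fin 6 → E7) : ℝ :=
  ∑ σ : Equiv.Perm (Fin 6), ((Equiv.Perm.sign σ : ℤ) : ℝ) *
    η x (v (σ 0)) (v (σ 1)) * a x (v (σ 2)) * b x (v (σ 3)) *
      c x (v (σ 4)) * d x (v (σ 5))


/-! Modulo `S₀` one has `dxʲ ≡ fʲ dt` for `j = 1,…,4`, so `dω₁¹ = -dx³ ∧ dx⁴ - dx² ∧ dt` and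
`dω₁² = -dx¹ ∧ dx⁴ - dx³ ∧ dt`, being multiples of `dt ∧ dt = 0` modulo `S₀`, are of the form
`∑ⱼ αⱼ ∧ ω₀ʲ`. Wedged with `ω₀¹ ∧ ω₀² ∧ ω₀³ ∧ ω₀⁴`, each term `αⱼ ∧ ω₀ʲ` gives an alternating sum
over permutations of a product of six 1-forms in which `ω₀ʲ` occurs twice, i.e. a determinant
with two equal columns. -/

open Equiv Matrix

def wedgeTwo {E R : Type*} [CommRing R] (α β : E → R) (v w : E) : R :=
  α v * β w - α w * β v

theorem sum_sign_mul_prod_eq_zero_of_eq {R E : Type*} [CommRing R] {n : ℕ}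
    (f : Fin n → E → R) (v : Fin n → E) {i j : Fin n} (hij : i ≠ j) (h : f i = f j) :
    ∑ σ : Perm (Fin n), ((Perm.sign σ : ℤ) : R) * ∏ k, f k (v (σ k)) = 0 := by
  have hdet : ∑ σ : Perm (Fin n), ((Perm.sign σ : ℤ) : R) * ∏ k, f k (v (σ k)) =
      (Matrix.of fun a b => f b (v a)).det := by
    rw [det_apply']; rfl
  rw [hdet]
  exact det_zero_of_column_eq hij fun k => by simp [h]

theorem dOne_const_sub {E : Type*} [NormedAddCommGroup E] [NormedSpace ℝ E]
    (c : E →L[ℝ] ℝ) (L : E →L[ℝ] E →L[ℝ] ℝ) (x v w : E) :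
    dOne (fun y => c - L y) x v w = L w v - L v w := by
  simp only [dOne, fderiv_const_sub, ContinuousLinearMap.fderiv, _root_.neg_apply]
  ring

-- The hypothesis says `η ≡ 0 mod span{a, b, c, d}` at `x`.
theorem wedge21111_eq_zero_of_eq_sum_wedgeTwo (η : E7 → E7 → E7 → ℝ)
    (a b c d : E7 → E7 →L[ℝ] ℝ) (x : E7) (α : Fin 4 → E7 → ℝ)
    (hη : ∀ v w, η x v w = ∑ j, wedgeTwo (α j) (![⇑(a x), ⇑(b x), ⇑(c x), ⇑(d x)] j) v w)
    (v : Fin 6 → E7) :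
    wedge21111 η a b c d x v = 0 := by
  set ω : Fin 4 → E7 → ℝ := ![⇑(a x), ⇑(b x), ⇑(c x), ⇑(d x)]
  let alt : (Fin 6 → E7 → ℝ) → ℝ := fun f =>
    ∑ σ : Perm (Fin 6), ((Perm.sign σ : ℤ) : ℝ) * ∏ k, f k (v (σ k))
  have hsplit : wedge21111 η a b c d x v =
      ∑ j, (alt (vecCons (α j) (vecCons (ω j) ω)) - alt (vecCons (ω j) (vecCons (α j) ω))) := by
    simp only [wedge21111, hη, wedgeTwo, alt]
    simp_rw [← Finset.sum_sub_distrib]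
    rw [Finset.sum_comm]
    refine Finset.sum_congr rfl fun σ _ => ?_
    simp only [Finset.mul_sum, Finset.sum_mul]
    refine Finset.sum_congr rfl fun j _ => ?_
    simp only [Fin.prod_univ_six]
    simp only [ω, cons_val_zero, cons_val_one, cons_val]
    ring
  rw [hsplit]
  refine Finset.sum_eq_zero fun j _ => ?_
  simp only [alt]
  -- `ω j` occurs in slot `1`, resp. `0`, and again in slot `j + 2`
  rw [sum_sign_mul_prod_eq_zero_of_eq _ v (i := 1) (j := j.succ.succ)
      (Fin.ne_of_val_ne (by simp only [Fin.val_succ, Fin.val_one]; omega)) rfl,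
    sum_sign_mul_prod_eq_zero_of_eq _ v (i := 0) (j := j.succ.succ)
      (Fin.ne_of_val_ne (by simp only [Fin.val_succ, Fin.val_zero]; omega)) rfl, sub_zero]

theorem ω11_eq_sub (x : E7) : ω11 x = ω01 x - x 3 • ω04 x := by
  ext y
  simp only [ω11, ω01, ω04, pr7, _root_.sub_apply, _root_.smul_apply, ContinuousLinearMap.proj_apply,
    smul_eq_mul]
  ring

theorem ω12_eq_sub (x : E7) : ω12 x = ω02 x - x 1 • ω04 x := by
  ext y
  simp only [ω12, ω02, ω04, pr7, _root_.sub_apply, _root_.smul_apply, ContinuousLinearMap.proj_apply,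
    smul_eq_mul]
  ring

theorem dOne_ω11_eq_sum_wedgeTwo (x v w : E7) :
    dOne ω11 x v w = ∑ j, wedgeTwo (![0, ⇑(pr7 0), ⇑(pr7 4), -(x 5 + x 2 * x 6) • ⇑(pr7 0)] j)
      (![⇑(ω01 x), ⇑(ω02 x), ⇑(ω03 x), ⇑(ω04 x)] j) v w := by
  have hω : ω11 = fun y => pr7 1 - ((pr7 3).smulRight (pr7 4) + (pr7 2).smulRight (pr7 0)) y := by
    funext y; ext z
    simp only [ω11, pr7, _root_.sub_apply, _root_.add_apply, _root_.smul_apply,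
      ContinuousLinearMap.smulRight_apply, ContinuousLinearMap.proj_apply, smul_eq_mul]
    ring
  rw [hω, dOne_const_sub]
  simp only [Fin.sum_univ_four, wedgeTwo, cons_val_zero, cons_val_one, cons_val, ω01, ω02, ω03,
    ω04, pr7, _root_.add_apply, _root_.sub_apply, _root_.smul_apply, Pi.zero_apply, Pi.smul_apply,
    ContinuousLinearMap.smulRight_apply, ContinuousLinearMap.proj_apply, smul_eq_mul]
  ring

theorem dOne_ω12_eq_sum_wedgeTwo (x v w : E7) :
    dOne ω12 x v w = ∑ j, wedgeTwo (![⇑(pr7 4), 0, ⇑(pr7 0), -(x 2 + x 3 * x 6) • ⇑(pr7 0)] j)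
      (![⇑(ω01 x), ⇑(ω02 x), ⇑(ω03 x), ⇑(ω04 x)] j) v w := by
  have hω : ω12 = fun y => pr7 2 - ((pr7 1).smulRight (pr7 4) + (pr7 3).smulRight (pr7 0)) y := by
    funext y; ext z
    simp only [ω12, pr7, _root_.sub_apply, _root_.add_apply, _root_.smul_apply,
      ContinuousLinearMap.smulRight_apply, ContinuousLinearMap.proj_apply, smul_eq_mul]
    ring
  rw [hω, dOne_const_sub]
  simp only [Fin.sum_univ_four, wedgeTwo, cons_val_zero, cons_val_one, cons_val, ω01, ω02, ω03,
    ω04, pr7, _root_.add_apply, _root_.sub_apply, _root_.smul_apply, Pi.zero_apply, Pi.smul_apply,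
    ContinuousLinearMap.smulRight_apply, ContinuousLinearMap.proj_apply, smul_eq_mul]
  ring

/-- For the Pfaffian representation `S₀ = span{ω₀¹,ω₀²,ω₀³,ω₀⁴}` of the system
`ẋ¹ = x² + x³u²`, `ẋ² = x³ + x¹u²`, `ẋ³ = u¹ + x²u²`, `ẋ⁴ = u²`, the 1-forms
`ω₁¹ = dx¹ - x³dx⁴ - x²dt`, `ω₁² = dx² - x¹dx⁴ - x³dt` span the first derived
system: each is a pointwise linear combination of the `ω₀ʲ` and
`dω₁ⁱ ∧ ω₀¹ ∧ ω₀² ∧ ω₀³ ∧ ω₀⁴ = 0` for `i = 1,2`. -/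
theorem derived_system_of_CharletSIAM_example :
    ∀ x : E7,
      (∃ c : Fin 4 → ℝ,
        ω11 x = c 0 • ω01 x + c 1 • ω02 x + c 2 • ω03 x + c 3 • ω04 x) ∧
      (∃ c : Fin 4 → ℝ,
        ω12 x = c 0 • ω01 x + c 1 • ω02 x + c 2 • ω03 x + c 3 • ω04 x) ∧
      (∀ v : Fin 6 → E7,
        wedge21111 (fun x' v' w' => dOne ω11 x' v' w') ω01 ω02 ω03 ω04 x v = 0) ∧
      (∀ v : Fin 6 → E7,
        wedge21111 (fun x' v' w' => dOne ω12 x' v' w') ω01 ω02 ω03 ω04 x v = 0) := by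
  intro x
  refine ⟨⟨![1, 0, 0, -x 3], ?_⟩, ⟨![0, 1, 0, -x 1], ?_⟩,
    wedge21111_eq_zero_of_eq_sum_wedgeTwo _ _ _ _ _ x _ (dOne_ω11_eq_sum_wedgeTwo x),
    wedge21111_eq_zero_of_eq_sum_wedgeTwo _ _ _ _ _ x _ (dOne_ω12_eq_sum_wedgeTwo x)⟩
  · simp only [ω11_eq_sub, cons_val]
    module
  · simp only [ω12_eq_sub, cons_val]
    module
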